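/- Let V be a real inner product space, W ⊆ V a subspace admitting an orthogonal projection onto it, and F : V → V a symmetric linear map with F² = I. If W is slant with slant angle ϑ with respect to F, then for all X, Y ∈ W: ⟨fX, fY⟩ = cos²ϑ·⟨X, Y⟩ and ⟨ωX, ωY⟩ = sin²ϑ·⟨X, Y⟩. -/

import Mathlib

open scoped RealInnerProductSpace

/-- The tangential part of `J X` with respect to the subspace `W`:
`T X := P_W (J X)` (also used for `t U := P_W (J U)` when `U ∈ Wᗮ`). -/
noncomputable def tang {V : Type*} [NormedAddCommGroup V] [InnerProductSpace ℝ V]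
    (W : Submodule ℝ V) [W.HasOrthogonalProjection] (J : V →ₗ[ℝ] V) (X : V) : V :=
  (W.orthogonalProjectionOnto (J X) : V)

/-- The normal part of `J X` with respect to the subspace `W`:
`N X := J X − T X` (also used for `n U := J U − t U` when `U ∈ Wᗮ`). -/
noncomputable def norm' {V : Type*} [NormedAddCommGroup V] [InnerProductSpace ℝ V]
    (W : Submodule ℝ V) [W.HasOrthogonalProjection] (J : V →ₗ[ℝ] V) (X : V) : V :=
  J X - tang W J X

/-!
Since `F` is a symmetric involution it is an isometry, so the slant condition says that the
linear map `f = P_W ∘ F` scales norms on `W` by `cos ϑ`; by polarization it scales inner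
products by `cos² ϑ`. Splitting `FX` and `FY` into their orthogonal `W`- and `Wᗮ`-parts gives
`⟨X, Y⟩ = ⟨FX, FY⟩ = ⟨fX, fY⟩ + ⟨ωX, ωY⟩`, whence `⟨ωX, ωY⟩ = (1 - cos² ϑ) ⟨X, Y⟩`.
-/

section

variable {E E' : Type*} [NormedAddCommGroup E] [InnerProductSpace ℝ E]
  [NormedAddCommGroup E'] [InnerProductSpace ℝ E']

theorem LinearMap.IsSymmetric.inner_map_map_of_involutive {F : E →ₗ[ℝ] E} (hF : F.IsSymmetric)
    (hF2 : Function.Involutive F) (x y : E) : ⟪F x, F y⟫ = ⟪x, y⟫ := by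
  rw [hF, hF2]

theorem LinearMap.inner_map_map_of_norm_map_eq_mul {T : E →ₗ[ℝ] E'} {W : Submodule ℝ E} {c : ℝ}
    (hT : ∀ x ∈ W, ‖T x‖ = c * ‖x‖) {x y : E} (hx : x ∈ W) (hy : y ∈ W) :
    ⟪T x, T y⟫ = c ^ 2 * ⟪x, y⟫ := by
  rw [real_inner_eq_norm_add_mul_self_sub_norm_mul_self_sub_norm_mul_self_div_two,
    real_inner_eq_norm_add_mul_self_sub_norm_mul_self_sub_norm_mul_self_div_two x, ← map_add,
    hT _ (W.add_mem hx hy), hT x hx, hT y hy]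
  ring

theorem Submodule.inner_eq_inner_starProjection_add_inner_sub_starProjection
    (K : Submodule ℝ E) [K.HasOrthogonalProjection] (v w : E) :
    ⟪v, w⟫ = ⟪K.starProjection v, K.starProjection w⟫ +
      ⟪v - K.starProjection v, w - K.starProjection w⟫ := by
  have hv : ⟪v - K.starProjection v, K.starProjection w⟫ = 0 :=
    K.starProjection_inner_eq_zero v _ (K.starProjection_apply_mem w)
  have hw : ⟪w - K.starProjection w, K.starProjection v⟫ = 0 :=
    K.starProjection_inner_eq_zero w _ (K.starProjection_apply_mem v)
  rw [real_inner_comm] at hw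
  conv_lhs => rw [← sub_add_cancel v (K.starProjection v), ← sub_add_cancel w (K.starProjection w)]
  rw [inner_add_left, inner_add_right, inner_add_right, hv, hw]
  ring

end

theorem slant_almost_product_inner_general {V : Type*} [NormedAddCommGroup V] [InnerProductSpace ℝ V]
    (W : Submodule ℝ V) [W.HasOrthogonalProjection]
    (F : V →ₗ[ℝ] V)
    (hFsym : ∀ x y : V, ⟪F x, y⟫ = ⟪x, F y⟫)
    (hF2 : ∀ v : V, F (F v) = v)
    (ϑ : ℝ)
    (hslant : ∀ X ∈ W, ‖tang W F X‖ = Real.cos ϑ * ‖F X‖) :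
    ∀ X ∈ W, ∀ Y ∈ W,
      ⟪tang W F X, tang W F Y⟫ = Real.cos ϑ ^ 2 * ⟪X, Y⟫ ∧
      ⟪norm' W F X, norm' W F Y⟫ = Real.sin ϑ ^ 2 * ⟪X, Y⟫ := by
  have hFinner := LinearMap.IsSymmetric.inner_map_map_of_involutive hFsym hF2
  have hFnorm : ∀ x, ‖F x‖ = ‖x‖ := (LinearMap.norm_map_iff_inner_map_map F).2 hFinner
  have htang : ∀ X ∈ W, ‖(W.starProjection.toLinearMap ∘ₗ F) X‖ = Real.cos ϑ * ‖X‖ :=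
    fun X hX => (hslant X hX).trans (by rw [hFnorm])
  intro X hX Y hY
  have hcos : ⟪tang W F X, tang W F Y⟫ = Real.cos ϑ ^ 2 * ⟪X, Y⟫ :=
    LinearMap.inner_map_map_of_norm_map_eq_mul htang hX hY
  have hsplit : ⟪X, Y⟫ = ⟪tang W F X, tang W F Y⟫ + ⟪norm' W F X, norm' W F Y⟫ := by
    rw [← hFinner]
    exact W.inner_eq_inner_starProjection_add_inner_sub_starProjection (F X) (F Y)
  refine ⟨hcos, ?_⟩
  rw [Real.sin_sq]
  linarith

/-- If `W` is slant with slant angle `ϑ` with respect to a symmetric almost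
product structure `F` (`F² = I`), then for all `X, Y ∈ W`:
`⟨fX, fY⟩ = cos²ϑ·⟨X, Y⟩` and `⟨ωX, ωY⟩ = sin²ϑ·⟨X, Y⟩`. -/
theorem slant_almost_product_inner {V : Type*} [NormedAddCommGroup V] [InnerProductSpace ℝ V]
    (W : Submodule ℝ V) [W.HasOrthogonalProjection]
    (F : V →ₗ[ℝ] V)
    (hFsym : ∀ x y : V, ⟪F x, y⟫ = ⟪x, F y⟫)
    (hF2 : ∀ v : V, F (F v) = v)
    (ϑ : ℝ) (hϑ : ϑ ∈ Set.Icc 0 (Real.pi / 2))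
    (hslant : ∀ X ∈ W, ‖tang W F X‖ = Real.cos ϑ * ‖F X‖) :
    ∀ X ∈ W, ∀ Y ∈ W,
      ⟪tang W F X, tang W F Y⟫ = Real.cos ϑ ^ 2 * ⟪X, Y⟫ ∧
      ⟪norm' W F X, norm' W F Y⟫ = Real.sin ϑ ^ 2 * ⟪X, Y⟫ :=
  slant_almost_product_inner_general W F hFsym hF2 ϑ hslant
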